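/- Let b be a strictly increasing sequence of positive integers and p > 0. If ∑_{n≥1} (b_n/b_{n+1})^p < ∞, then G_p(b) = {t ∈ ℝ/ℤ : ∑_n ‖b_n t‖^p < ∞} is uncountable. (In fact it contains a Cantor set of t with ‖b_n t‖ ≤ 4 b_n/b_{n+1} for all large n.) -/

import Mathlib

/-- `G_p(b)` inside the circle `ℝ/ℤ`; the norm on `AddCircle (1:ℝ)` is the
distance to the nearest integer. -/
noncomputable def Gp (b : ℕ → ℕ) (p : ℝ) : Set (AddCircle (1:ℝ)) :=
  {t | Summable (fun n => ‖b n • t‖ ^ p)}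

/-!
Pass to a tail of `b` along which `b (n + 1) > 10 * b n`. For each `S ⊆ ℕ` define numerators by
`a 0 = 0`, `a (n + 1) = ⌈b (n + 1) * a n / b n⌉ + [n ∈ S]`. The fractions `a n / b n` increase by
at most `2 / b (n + 1)`, so the intervals `[a n / b n, a n / b n + 4 / b (n + 1)]` are nested and
have a common point `t_S`, which satisfies `‖b n t_S‖ ≤ 4 b n / b (n + 1)`; comparison with
`∑ (b n / b (n + 1)) ^ p` puts `t_S` in `G_p(b)`. Since `4 b n / b (n + 1) < 1`, the numerators are
recovered as `a n = ⌊b n t_S⌋`, and they determine `S`: so `S ↦ t_S` is injective.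
-/

namespace LacunaryCantor

variable (B : ℕ → ℕ) (S : Set ℕ)

open Classical in
noncomputable def num : ℕ → ℕ
  | 0 => 0
  | n + 1 => ⌈(B (n + 1) : ℝ) * (num n / B n)⌉₊ + if n ∈ S then 1 else 0

noncomputable def approx (n : ℕ) : ℝ := num B S n / B n

noncomputable def point : ℝ := ⨆ n, approx B S n

variable {B}

lemma num_succ_mem_Ico (n : ℕ) :
    (num B S (n + 1) : ℝ) ∈ Set.Ico (B (n + 1) * approx B S n) (B (n + 1) * approx B S n + 2) := by
  have h0 : 0 ≤ (B (n + 1) : ℝ) * approx B S n := by unfold approx; positivity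
  have hceil_lt := Nat.ceil_lt_add_one h0
  have hle_ceil := Nat.le_ceil ((B (n + 1) : ℝ) * approx B S n)
  unfold approx at *
  rw [num]
  split_ifs <;> push_cast <;> constructor <;> linarith

lemma approx_le_approx_succ (hpos : ∀ n, 0 < B n) (n : ℕ) :
    approx B S n ≤ approx B S (n + 1) := by
  have hB : (0 : ℝ) < B (n + 1) := by exact_mod_cast hpos (n + 1)
  show _ ≤ (num B S (n + 1) : ℝ) / B (n + 1)
  rw [le_div_iff₀ hB, mul_comm]
  exact (num_succ_mem_Ico S n).1

lemma approx_succ_le (hpos : ∀ n, 0 < B n) (n : ℕ) :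
    approx B S (n + 1) ≤ approx B S n + 2 / B (n + 1) := by
  have hB : (0 : ℝ) < B (n + 1) := by exact_mod_cast hpos (n + 1)
  show (num B S (n + 1) : ℝ) / B (n + 1) ≤ _
  rw [div_le_iff₀ hB, add_mul, div_mul_cancel₀ _ hB.ne', mul_comm]
  exact (num_succ_mem_Ico S n).2.le

lemma monotone_approx (hpos : ∀ n, 0 < B n) : Monotone (approx B S) :=
  monotone_nat_of_le_succ (approx_le_approx_succ S hpos)

lemma antitone_approx_add (hpos : ∀ n, 0 < B n) (hB : ∀ n, 10 * B n < B (n + 1)) :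
    Antitone fun n => approx B S n + 4 / B (n + 1) := by
  refine antitone_nat_of_succ_le fun n => ?_
  have h1 : (0 : ℝ) < B (n + 1) := by exact_mod_cast hpos (n + 1)
  have h10 : 10 * (B (n + 1) : ℝ) ≤ B (n + 1 + 1) := by exact_mod_cast (hB (n + 1)).le
  have : 4 / (B (n + 1 + 1) : ℝ) ≤ 2 / B (n + 1) := by
    rw [div_le_div_iff₀ (by linarith) h1]; linarith
  calc approx B S (n + 1) + 4 / B (n + 1 + 1)
      ≤ approx B S n + 2 / B (n + 1) + 2 / B (n + 1) := add_le_add (approx_succ_le S hpos n) this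
    _ = approx B S n + 4 / B (n + 1) := by ring

lemma point_mem_Icc (hpos : ∀ n, 0 < B n) (hB : ∀ n, 10 * B n < B (n + 1)) (n : ℕ) :
    point B S ∈ Set.Icc (approx B S n) (approx B S n + 4 / B (n + 1)) :=
  Set.mem_iInter.1 ((monotone_approx S hpos).ciSup_mem_iInter_Icc_of_antitone
    (antitone_approx_add S hpos hB) fun k => le_add_of_nonneg_right (by positivity)) n

lemma mul_point_mem_Icc (hpos : ∀ n, 0 < B n) (hB : ∀ n, 10 * B n < B (n + 1)) (n : ℕ) :
    B n * point B S ∈ Set.Icc (num B S n : ℝ) (num B S n + 4 * B n / B (n + 1)) := by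
  have hn : (0 : ℝ) < B n := by exact_mod_cast hpos n
  obtain ⟨hlo, hhi⟩ := point_mem_Icc S hpos hB n
  rw [approx] at hlo hhi
  constructor
  · rwa [div_le_iff₀ hn, mul_comm] at hlo
  · calc (B n : ℝ) * point B S ≤ B n * (num B S n / B n + 4 / B (n + 1)) := by gcongr
      _ = num B S n + 4 * B n / B (n + 1) := by field_simp

lemma four_mul_div_lt_one (hpos : ∀ n, 0 < B n) (hB : ∀ n, 10 * B n < B (n + 1)) (n : ℕ) :
    4 * (B n : ℝ) / B (n + 1) < 1 := by
  have h1 : (0 : ℝ) < B (n + 1) := by exact_mod_cast hpos (n + 1)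
  have h10 : 10 * (B n : ℝ) < B (n + 1) := by exact_mod_cast hB n
  rw [div_lt_one h1]; linarith [(Nat.cast_nonneg (B n) : (0 : ℝ) ≤ B n)]

lemma num_eq_floor (hpos : ∀ n, 0 < B n) (hB : ∀ n, 10 * B n < B (n + 1)) (n : ℕ) :
    num B S n = ⌊B n * point B S⌋₊ := by
  obtain ⟨hlo, hhi⟩ := mul_point_mem_Icc S hpos hB n
  refine ((Nat.floor_eq_iff ((Nat.cast_nonneg _).trans hlo)).2 ⟨hlo, ?_⟩).symm
  linarith [four_mul_div_lt_one hpos hB n]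

variable (B) in
lemma point_injective (hpos : ∀ n, 0 < B n) (hB : ∀ n, 10 * B n < B (n + 1)) :
    Function.Injective (point B) := by
  intro S T hST
  have hnum : num B S = num B T := funext fun n => by
    rw [num_eq_floor S hpos hB, num_eq_floor T hpos hB, hST]
  ext n
  have h := congrFun hnum (n + 1)
  simp only [num, congrFun hnum n] at h
  split_ifs at h <;> simp_all

lemma point_mem_Ico (hpos : ∀ n, 0 < B n) (hB : ∀ n, 10 * B n < B (n + 1)) :
    point B S ∈ Set.Ico 0 1 := by
  obtain ⟨hlo, hhi⟩ := point_mem_Icc S hpos hB 0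
  have h10 : (10 : ℝ) < B 1 := by
    exact_mod_cast (Nat.le_mul_of_pos_right 10 (hpos 0)).trans_lt (hB 0)
  have h4 : 4 / (B 1 : ℝ) < 1 := by rw [div_lt_one (by linarith)]; linarith
  simp only [approx, num, Nat.cast_zero, zero_div, zero_add] at hlo hhi
  exact ⟨hlo, hhi.trans_lt h4⟩

lemma norm_nsmul_point_le (hpos : ∀ n, 0 < B n) (hB : ∀ n, 10 * B n < B (n + 1)) (n : ℕ) :
    ‖B n • (point B S : AddCircle (1 : ℝ))‖ ≤ 4 * B n / B (n + 1) := by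
  obtain ⟨hlo, hhi⟩ := mul_point_mem_Icc S hpos hB n
  rw [← AddCircle.coe_nsmul, nsmul_eq_mul, UnitAddCircle.norm_eq]
  calc |B n * point B S - round (B n * point B S)|
      ≤ |B n * point B S - ((num B S n : ℤ) : ℝ)| := round_le _ _
    _ ≤ 4 * B n / B (n + 1) := by
      rw [Int.cast_natCast, abs_of_nonneg (by linarith)]; linarith

end LacunaryCantor

open LacunaryCantor in
theorem not_countable_setOf_norm_nsmul_le {B : ℕ → ℕ} (hpos : ∀ n, 0 < B n)
    (hB : ∀ n, 10 * B n < B (n + 1)) :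
    ¬ {t : AddCircle (1 : ℝ) | ∀ n, ‖B n • t‖ ≤ 4 * B n / B (n + 1)}.Countable := by
  intro hcount
  have hinj : Function.Injective fun S => (point B S : AddCircle (1 : ℝ)) := fun S T h =>
    point_injective B hpos hB <| (AddCircle.coe_eq_coe_iff_of_mem_Ico (a := 0)
      (by simpa using point_mem_Ico S hpos hB) (by simpa using point_mem_Ico T hpos hB)).1 h
  have huniv : (Set.univ : Set (Set ℕ)).Countable :=
    Set.MapsTo.countable_of_injOn (fun S _ => by exact norm_nsmul_point_le S hpos hB)
      hinj.injOn hcount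
  obtain ⟨f, hf⟩ := countable_iff_exists_surjective.1 (Set.countable_univ_iff.1 huniv)
  exact Function.cantor_surjective f hf

open Filter

lemma eventually_ten_mul_lt_of_summable_rpow {b : ℕ → ℕ} (hbpos : ∀ n, 0 < b n) {p : ℝ}
    (hp : 0 < p) (hsum : Summable fun n => ((b n : ℝ) / b (n + 1)) ^ p) :
    ∀ᶠ n in atTop, 10 * b n < b (n + 1) := by
  have hsmall : ∀ᶠ n in atTop, ((b n : ℝ) / b (n + 1)) ^ p < (1 / 10) ^ p :=
    hsum.tendsto_atTop_zero.eventually_lt_const (by positivity)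
  filter_upwards [hsmall] with n hn
  have hb : (0 : ℝ) < b (n + 1) := by exact_mod_cast hbpos (n + 1)
  rw [Real.rpow_lt_rpow_iff (by positivity) (by norm_num) hp, div_lt_iff₀ hb] at hn
  exact_mod_cast (by linarith : (10 : ℝ) * b n < b (n + 1))

lemma mem_Gp_of_eventually_norm_nsmul_le {b : ℕ → ℕ} {p : ℝ} (hp : 0 ≤ p)
    (hsum : Summable fun n => ((b n : ℝ) / b (n + 1)) ^ p) {t : AddCircle (1 : ℝ)}
    (ht : ∀ᶠ n in atTop, ‖b n • t‖ ≤ 4 * b n / b (n + 1)) : t ∈ Gp b p := by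
  refine (hsum.mul_left (4 ^ p)).of_norm_bounded_eventually_nat ?_
  filter_upwards [ht] with n hn
  rw [Real.norm_of_nonneg (by positivity), ← Real.mul_rpow (by norm_num) (by positivity),
    ← mul_div_assoc]
  exact Real.rpow_le_rpow (norm_nonneg _) hn hp

theorem stmt7_general (b : ℕ → ℕ) (hbpos : ∀ n, 0 < b n) (p : ℝ) (hp : 0 < p)
    (hsum : Summable (fun n => ((b n : ℝ) / (b (n + 1) : ℝ)) ^ p)) :
    ¬ (Gp b p).Countable := by
  obtain ⟨N, hN⟩ := eventually_atTop.1 (eventually_ten_mul_lt_of_summable_rpow hbpos hp hsum)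
  have hshift (k : ℕ) : b (k + 1 + N) = b (k + N + 1) := by rw [Nat.add_right_comm]
  have hgrowth (k : ℕ) : 10 * b (k + N) < b (k + 1 + N) := hshift k ▸ hN _ (Nat.le_add_left N k)
  refine fun hcount => not_countable_setOf_norm_nsmul_le (fun k => hbpos (k + N)) hgrowth
    (hcount.mono fun t ht => ?_)
  refine mem_Gp_of_eventually_norm_nsmul_le hp.le hsum (eventually_atTop.2 ⟨N, fun n hn => ?_⟩)
  obtain ⟨k, rfl⟩ := Nat.exists_eq_add_of_le' hn
  rw [← hshift]
  exact ht k

/-- If `∑ₙ (bₙ/bₙ₊₁)ᵖ < ∞` for some `p > 0`, then `G_p(b)` is uncountable. -/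
theorem stmt7 (b : ℕ → ℕ) (hb : StrictMono b) (hbpos : ∀ n, 0 < b n) (p : ℝ) (hp : 0 < p)
    (hsum : Summable (fun n => ((b n : ℝ) / (b (n + 1) : ℝ)) ^ p)) :
    ¬ (Gp b p).Countable :=
  stmt7_general b hbpos p hp hsum
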